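/- For all x, y ∈ [−1,1] with x ≠ y, the series ∑_{n=1}^∞ (2/n) · T_n(x) · T_n(y) converges and equals −log(2|x − y|). -/

import Mathlib

open Filter Finset Topology

/-- The Chebyshev polynomial of the first kind, evaluated at `x`. -/
noncomputable def chebT (n : ℕ) (x : ℝ) : ℝ := (Polynomial.Chebyshev.T ℝ n).eval x

section Aux
open Complex

lemma exp_theta_I (θ : ℝ) : Complex.exp (θ * Complex.I)
    = (Real.cos θ : ℂ) + (Real.sin θ : ℂ) * Complex.I := by
  rw [Complex.exp_mul_I, Complex.ofReal_cos, Complex.ofReal_sin]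

lemma abs_one_sub_exp (θ : ℝ) :
    ‖1 - Complex.exp (θ * Complex.I)‖ = 2 * |Real.sin (θ / 2)| := by
  have hre : (1 - Complex.exp (θ * Complex.I)).re = 1 - Real.cos θ := by
    rw [exp_theta_I]; simp [Complex.cos_ofReal_re]
  have him : (1 - Complex.exp (θ * Complex.I)).im = -Real.sin θ := by
    rw [exp_theta_I]; simp [Complex.sin_ofReal_re]
  rw [Complex.norm_def, Complex.normSq_apply, hre, him]
  have hcos : Real.cos θ = 1 - 2 * Real.sin (θ/2) ^ 2 := by
    have h2 : θ = 2 * (θ/2) := by ring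
    nth_rewrite 1 [h2]
    rw [Real.cos_two_mul]
    have := Real.sin_sq_add_cos_sq (θ/2)
    nlinarith
  have hsin : Real.sin θ = 2 * Real.sin (θ/2) * Real.cos (θ/2) := by
    have h2 : θ = 2 * (θ/2) := by ring
    nth_rewrite 1 [h2]
    rw [Real.sin_two_mul]
  have key : (1 - Real.cos θ) * (1 - Real.cos θ) + (-Real.sin θ) * (-Real.sin θ)
      = (2 * |Real.sin (θ/2)|)^2 := by
    rw [hcos, hsin]
    have := Real.sin_sq_add_cos_sq (θ/2)
    rw [mul_pow, _root_.sq_abs]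
    nlinarith
  rw [key, Real.sqrt_sq (by positivity)]

lemma key (θ : ℝ) (hθ : Complex.exp (θ * Complex.I) ≠ 1) :
    Tendsto (fun m : ℕ => ∑ n ∈ Finset.Icc 1 m, Real.cos (n * θ) / n) atTop
      (𝓝 (-Real.log (2 * |Real.sin (θ / 2)|))) := by
  set z : ℂ := Complex.exp (θ * Complex.I) with hzdef
  have hz1' : ‖z‖ = 1 := Complex.norm_exp_ofReal_mul_I θ
  have h1z : (1 : ℂ) - z ≠ 0 := sub_ne_zero.mpr (Ne.symm hθ)
  have hz1pos : (0:ℝ) < ‖(1:ℂ) - z‖ := norm_pos_iff.mpr h1z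
  -- Dirichlet test : partial sums converge
  have hb : ∀ n : ℕ, ‖∑ i ∈ Finset.range n, z ^ (i + 1)‖ ≤ 2 / ‖(1:ℂ) - z‖ := by
    intro n
    have hgs : ∑ i ∈ Finset.range n, z ^ (i + 1) = z * ((z ^ n - 1) / (z - 1)) := by
      rw [← geom_sum_eq hθ n, Finset.mul_sum]
      exact Finset.sum_congr rfl fun i _ => by ring
    rw [hgs, norm_mul, hz1', one_mul, norm_div]
    rw [div_le_div_iff₀ (by rw [norm_sub_rev]; exact hz1pos) hz1pos]
    have h2 : ‖z ^ n - 1‖ ≤ 2 := by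
      calc ‖z ^ n - 1‖ ≤ ‖z ^ n‖ + ‖(1:ℂ)‖ := norm_sub_le _ _
        _ = 2 := by rw [norm_pow, hz1']; norm_num
    calc ‖z ^ n - 1‖ * ‖(1:ℂ) - z‖ ≤ 2 * ‖(1:ℂ) - z‖ :=
          mul_le_mul_of_nonneg_right h2 (norm_nonneg _)
      _ = 2 * ‖z - 1‖ := by rw [norm_sub_rev]
  have hant : Antitone (fun n : ℕ => 1 / ((n : ℝ) + 1)) := by
    intro a b h
    have hab : (a : ℝ) ≤ b := Nat.cast_le.mpr h
    apply one_div_le_one_div_of_le (by positivity)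
    linarith
  have h0 : Tendsto (fun n : ℕ => 1 / ((n : ℝ) + 1)) atTop (𝓝 0) :=
    tendsto_one_div_add_atTop_nhds_zero_nat
  have hcauchy := hant.cauchySeq_series_mul_of_tendsto_zero_of_bounded h0 hb
  obtain ⟨ℓ, hℓ⟩ := cauchySeq_tendsto_of_complete hcauchy
  set f : ℕ → ℂ := fun n => z ^ n / n with hfdef
  have hS : Tendsto (fun m : ℕ => ∑ i ∈ Finset.range m, f i) atTop (𝓝 ℓ) := by
    have heq : ∀ m : ℕ, ∑ i ∈ Finset.range (m + 1), f i
        = ∑ i ∈ Finset.range m, (1 / ((i : ℝ) + 1)) • z ^ (i + 1) := by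
      intro m
      rw [Finset.sum_range_succ']
      simp only [hfdef, pow_zero, Nat.cast_zero, div_zero, add_zero]
      refine Finset.sum_congr rfl fun i _ => ?_
      push_cast
      rw [real_smul]
      push_cast
      ring
    rw [← tendsto_add_atTop_iff_nat 1]
    exact (Tendsto.congr (fun m => (heq m).symm) hℓ)
  -- Abel's limit theorem identifies ℓ
  have habel := Complex.tendsto_tsum_powerSeries_nhdsWithin_lt hS
  rw [Filter.tendsto_map'_iff] at habel
  have hev : ∀ᶠ r : ℝ in 𝓝[<] (1:ℝ), ((fun z => ∑' n, f n * z ^ n) ∘ ofReal) r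
      = -Complex.log (1 - r * z) := by
    filter_upwards [Ioo_mem_nhdsLT_of_mem (by norm_num : (1:ℝ) ∈ Set.Ioc (0:ℝ) 1)] with r hr
    have hr1 : ‖(r : ℂ) * z‖ < 1 := by
      rw [norm_mul, hz1', mul_one, Complex.norm_real, Real.norm_eq_abs, abs_of_pos hr.1]
      exact hr.2
    rw [← (Complex.hasSum_taylorSeries_neg_log hr1).tsum_eq]
    simp only [Function.comp_apply]
    congr 1 with n
    simp only [hfdef, mul_pow]
    ring
  have hcont : Tendsto (fun r : ℝ => -Complex.log (1 - r * z)) (𝓝[<] (1:ℝ))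
      (𝓝 (-Complex.log (1 - z))) := by
    have hslit : (1 - z) ∈ Complex.slitPlane := by
      rw [Complex.mem_slitPlane_iff]
      have hre : z.re = Real.cos θ := by
        rw [hzdef, exp_theta_I]; simp [Complex.cos_ofReal_re]
      have him : z.im = Real.sin θ := by
        rw [hzdef, exp_theta_I]; simp [Complex.sin_ofReal_re]
      rcases eq_or_ne (Real.sin θ) 0 with hs | hs
      · left
        have hc : (Real.cos θ - 1) * (Real.cos θ + 1) = 0 := by
          have := Real.sin_sq_add_cos_sq θ
          nlinarith
        rcases mul_eq_zero.mp hc with h | h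
        · exfalso
          apply hθ
          rw [Complex.ext_iff]
          constructor
          · rw [hre]; simp; linarith
          · rw [him]; simp [hs]
        · simp only [Complex.sub_re, Complex.one_re, hre]
          linarith
      · right
        simp [him, hs]
    have h1 : Tendsto (fun r : ℝ => (1 : ℂ) - r * z) (𝓝[<] (1:ℝ)) (𝓝 (1 - z)) := by
      apply Tendsto.mono_left _ nhdsWithin_le_nhds
      have hcts : Continuous (fun r : ℝ => (1 : ℂ) - r * z) := by continuity
      simpa using hcts.tendsto 1
    exact ((continuousAt_clog hslit).tendsto.comp h1).neg
  have hℓeq : ℓ = -Complex.log (1 - z) :=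
    tendsto_nhds_unique (habel.congr' hev) hcont
  -- take real parts
  have hre : Tendsto (fun m : ℕ => (∑ i ∈ Finset.range m, f i).re) atTop
      (𝓝 ((-Complex.log (1 - z)).re)) := by
    rw [← hℓeq]
    exact (Complex.continuous_re.tendsto _).comp hS
  have hre_sum : ∀ m : ℕ, (∑ i ∈ Finset.range m, f i).re
      = ∑ i ∈ Finset.range m, Real.cos (i * θ) / i := by
    intro m
    rw [Complex.re_sum]
    refine Finset.sum_congr rfl fun i _ => ?_
    simp only [hfdef]
    have hzi : z ^ i = Complex.exp ((i * θ : ℝ) * Complex.I) := by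
      rw [hzdef, ← Complex.exp_nat_mul]
      push_cast
      ring_nf
    rw [hzi, show ((i : ℂ)) = ((i : ℝ) : ℂ) from (Complex.ofReal_natCast i).symm,
      Complex.div_ofReal_re, Complex.exp_ofReal_mul_I_re]
  have hfinal : Tendsto (fun m : ℕ => ∑ i ∈ Finset.range m, Real.cos (i * θ) / i) atTop
      (𝓝 (-Real.log (2 * |Real.sin (θ / 2)|))) := by
    have hv : (-Complex.log (1 - z)).re = -Real.log (2 * |Real.sin (θ / 2)|) := by
      rw [Complex.neg_re, Complex.log_re, hzdef, abs_one_sub_exp]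
    rw [← hv]
    exact hre.congr hre_sum
  have hIcc : ∀ m : ℕ, ∑ n ∈ Finset.Icc 1 m, Real.cos (n * θ) / n
      = ∑ i ∈ Finset.range (m + 1), Real.cos (i * θ) / i := by
    intro m
    have hins : Finset.range (m + 1) = insert 0 (Finset.Icc 1 m) := by
      ext j
      simp only [Finset.mem_range, Finset.mem_insert, Finset.mem_Icc]
      omega
    rw [hins, Finset.sum_insert (by simp)]
    simp
  rw [show (fun m : ℕ => ∑ n ∈ Finset.Icc 1 m, Real.cos (n * θ) / n)
      = fun m : ℕ => ∑ i ∈ Finset.range (m + 1), Real.cos (i * θ) / i from funext hIcc]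
  exact hfinal.comp (tendsto_add_atTop_nat 1)

end Aux

lemma exp_ne_one (φ : ℝ) (h : ∀ k : ℤ, φ ≠ k * (2 * Real.pi)) :
    Complex.exp (φ * Complex.I) ≠ 1 := by
  intro hE
  rw [Complex.exp_eq_one_iff] at hE
  obtain ⟨k, hk⟩ := hE
  apply h k
  have h2 : (φ : ℂ) * Complex.I = ((k : ℂ) * (2 * Real.pi)) * Complex.I := by
    rw [hk]; push_cast; ring
  have h3 : (φ : ℂ) = (k : ℂ) * (2 * Real.pi) := mul_right_cancel₀ Complex.I_ne_zero h2
  exact_mod_cast h3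


/-- For `x, y ∈ [−1,1]`, `x ≠ y`: `∑_{n≥1} (2/n) T_n(x) T_n(y) = −log(2|x−y|)`,
with convergence of the partial sums. -/
theorem stmt_14
    (x y : ℝ) (hx : x ∈ Set.Icc (-1 : ℝ) 1) (hy : y ∈ Set.Icc (-1 : ℝ) 1)
    (hxy : x ≠ y) :
    Tendsto
      (fun m : ℕ => ∑ n ∈ Finset.Icc 1 m, (2 / (n : ℝ)) * chebT n x * chebT n y)
      atTop
      (𝓝 (-Real.log (2 * |x - y|))) := by
  obtain ⟨hx1, hx2⟩ := hx
  obtain ⟨hy1, hy2⟩ := hy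
  set a := Real.arccos x with hadef
  set b := Real.arccos y with hbdef
  have hca : Real.cos a = x := Real.cos_arccos hx1 hx2
  have hcb : Real.cos b = y := Real.cos_arccos hy1 hy2
  have ha0 : 0 ≤ a := Real.arccos_nonneg x
  have hapi : a ≤ Real.pi := Real.arccos_le_pi x
  have hb0 : 0 ≤ b := Real.arccos_nonneg y
  have hbpi : b ≤ Real.pi := Real.arccos_le_pi y
  have hpi := Real.pi_pos
  have hab : a ≠ b := fun h => hxy (by rw [← hca, ← hcb, h])
  -- non-degeneracy of the two angles
  have hk1 : ∀ k : ℤ, a - b ≠ k * (2 * Real.pi) := by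
    intro k h
    rcases eq_or_ne k 0 with rfl | hk0
    · simp at h
      exact hab (by linarith)
    · have h1 : |a - b| ≤ Real.pi := abs_sub_le_iff.mpr ⟨by linarith, by linarith⟩
      have h2 : (1 : ℝ) ≤ |(k : ℝ)| := by
        rw [← Int.cast_abs]
        exact_mod_cast Int.one_le_abs hk0
      have h3 : |a - b| = |(k : ℝ)| * (2 * Real.pi) := by
        rw [h, abs_mul, abs_of_pos (by linarith : (0:ℝ) < 2 * Real.pi)]
      nlinarith
  have hk2 : ∀ k : ℤ, a + b ≠ k * (2 * Real.pi) := by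
    have hlt : a + b < 2 * Real.pi := by
      rcases lt_or_eq_of_le hapi with h | h
      · linarith
      · rcases lt_or_eq_of_le hbpi with h' | h'
        · linarith
        · exact absurd (h.trans h'.symm) hab
    have hgt : 0 < a + b := by
      rcases lt_or_eq_of_le ha0 with h | h
      · linarith
      · rcases lt_or_eq_of_le hb0 with h' | h'
        · linarith
        · exact absurd (h.symm.trans h') hab
    intro k h
    have hk0 : (0 : ℝ) < (k : ℝ) := by nlinarith
    have hk1' : (k : ℝ) < 1 := by nlinarith
    have : (0 : ℤ) < k := by exact_mod_cast hk0
    have : k < 1 := by exact_mod_cast hk1'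
    omega
  have h1 := key (a - b) (exp_ne_one _ hk1)
  have h2 := key (a + b) (exp_ne_one _ hk2)
  -- chebT evaluations
  have hch : ∀ n : ℕ, chebT n x = Real.cos (n * a) := by
    intro n
    rw [chebT, ← hca, Polynomial.Chebyshev.T_real_cos]
    push_cast
    ring_nf
  have hch' : ∀ n : ℕ, chebT n y = Real.cos (n * b) := by
    intro n
    rw [chebT, ← hcb, Polynomial.Chebyshev.T_real_cos]
    push_cast
    ring_nf
  -- rewrite summand
  have hsum : ∀ m : ℕ, ∑ n ∈ Finset.Icc 1 m, (2 / (n : ℝ)) * chebT n x * chebT n y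
      = (∑ n ∈ Finset.Icc 1 m, Real.cos (n * (a - b)) / n)
        + ∑ n ∈ Finset.Icc 1 m, Real.cos (n * (a + b)) / n := by
    intro m
    rw [← Finset.sum_add_distrib]
    refine Finset.sum_congr rfl fun n hn => ?_
    have hn1 : 1 ≤ n := (Finset.mem_Icc.mp hn).1
    have hn0 : (n : ℝ) ≠ 0 := by positivity
    rw [hch n, hch' n,
      show (n : ℝ) * (a - b) = (n : ℝ) * a - (n : ℝ) * b by ring,
      show (n : ℝ) * (a + b) = (n : ℝ) * a + (n : ℝ) * b by ring,
      Real.cos_sub, Real.cos_add]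
    field_simp
    ring
  -- the limit value
  have hxy0 : |x - y| ≠ 0 := abs_ne_zero.mpr (sub_ne_zero.mpr hxy)
  have hprod : 2 * |x - y| = (2 * |Real.sin ((a - b) / 2)|) * (2 * |Real.sin ((a + b) / 2)|) := by
    rw [← hca, ← hcb, Real.cos_sub_cos, abs_mul, abs_mul]
    rw [show |(-2 : ℝ)| = 2 by norm_num]
    ring
  have hne2 : (2 * |Real.sin ((a - b) / 2)|) * (2 * |Real.sin ((a + b) / 2)|) ≠ 0 := by
    rw [← hprod]
    positivity
  obtain ⟨hA, hB⟩ := mul_ne_zero_iff.mp hne2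
  have hlim : -Real.log (2 * |x - y|)
      = -Real.log (2 * |Real.sin ((a - b) / 2)|) + -Real.log (2 * |Real.sin ((a + b) / 2)|) := by
    rw [hprod, Real.log_mul hA hB]
    ring
  simp only [hsum, hlim]
  exact h1.add h2
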